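/- Suppose T* is an optimal overlapping testing regime and there exist distinct tests t*_{j'}, t*_j with j' < j such that every individual in t*_{j'} \ t*_j is healthy with probability 1. Then the regime obtained by replacing t*_j with t*_j \ t*_{j'} (keeping other tests) has welfare at least that of T*. -/

import Mathlib

open Finset

/-- Probability of a health realization `ω` (true = healthy) under independent
healthy-probabilities `q`. -/
noncomputable def healthProb {n : ℕ} (q : Fin n → ℝ) (ω : Fin n → Bool) : ℝ :=
  ∏ i, if ω i then q i else 1 - q i

/-- Probability that individual `i` lies in at least one negative test of the regime `T`. -/
noncomputable def inNegProb {n B : ℕ} (q : Fin n → ℝ) (T : Fin B → Finset (Fin n))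
    (i : Fin n) : ℝ :=
  ∑ ω : Fin n → Bool,
    if ∃ j, i ∈ T j ∧ ∀ k ∈ T j, ω k = true then healthProb q ω else 0

/-- Expected welfare of a (possibly overlapping) testing regime `T`. -/
noncomputable def welfare {n B : ℕ} (q u : Fin n → ℝ) (T : Fin B → Finset (Fin n)) : ℝ :=
  ∑ i, u i * inNegProb q T i

/-- Stand-alone expected welfare of a single pooled test `t`. -/
noncomputable def testWelfare {n : ℕ} (q u : Fin n → ℝ) (t : Finset (Fin n)) : ℝ :=
  (∏ i ∈ t, q i) * ∑ i ∈ t, u i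

/-- Welfare of a non-overlapping testing regime, as a sum of stand-alone test welfares. -/
noncomputable def noWelfare {n B : ℕ} (q u : Fin n → ℝ) (T : Fin B → Finset (Fin n)) : ℝ :=
  ∑ j, testWelfare q u (T j)

/-- Probability that test `T j` is pivotal for individual `i`: `i ∈ T j`, test `T j` is
negative, and every earlier test containing `i` is positive. -/
noncomputable def pivotalProb {n B : ℕ} (q : Fin n → ℝ) (T : Fin B → Finset (Fin n))
    (i : Fin n) (j : Fin B) : ℝ :=
  ∑ ω : Fin n → Bool,
    if i ∈ T j ∧ (∀ k ∈ T j, ω k = true) ∧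
        (∀ j' : Fin B, j' < j → i ∈ T j' → ∃ k ∈ T j', ω k = false)
      then healthProb q ω else 0

/-
Realization by realization, the new regime clears everyone the old one did, except on
realizations in which somebody in `T* j' \ T* j` is sick, and those have probability zero.
Indeed, if `i` is cleared by a negative test other than `T* j`, that test is unchanged; if it is
cleared by `T* j` and `i ∉ T* j'`, then `T* j \ T* j'` is still negative and contains `i`; and if
`i ∈ T* j'`, then `T* j'` is negative, since its members lie in `T* j` or are healthy.
-/

abbrev InNegTest {n B : ℕ} (T : Fin B → Finset (Fin n)) (ω : Fin n → Bool) (i : Fin n) : Prop :=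
  ∃ j, i ∈ T j ∧ ∀ k ∈ T j, ω k = true

section Probability

variable {n : ℕ} {q : Fin n → ℝ}

theorem healthProb_nonneg (hq : ∀ i, 0 ≤ q i ∧ q i ≤ 1) (ω : Fin n → Bool) :
    0 ≤ healthProb q ω :=
  prod_nonneg fun k _ => by
    split
    · exact (hq k).1
    · linarith [(hq k).2]

theorem eq_true_of_healthProb_ne_zero {ω : Fin n → Bool} (hω : healthProb q ω ≠ 0) {k : Fin n}
    (hk : q k = 1) : ω k = true := by
  by_contra hsick
  refine hω (prod_eq_zero (mem_univ k) ?_)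
  simp [Bool.eq_false_iff.mpr hsick, hk]

theorem inNegProb_le_of_imp {B B' : ℕ} (hq : ∀ i, 0 ≤ q i ∧ q i ≤ 1)
    {T : Fin B → Finset (Fin n)} {T' : Fin B' → Finset (Fin n)} {i : Fin n}
    (h : ∀ ω, healthProb q ω ≠ 0 → InNegTest T ω i → InNegTest T' ω i) :
    inNegProb q T i ≤ inNegProb q T' i := by
  refine sum_le_sum fun ω _ => ?_
  by_cases hω : healthProb q ω = 0
  · simp [hω]
  by_cases hT : InNegTest T ω i
  · rw [if_pos hT, if_pos (h ω hω hT)]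
  · rw [if_neg hT]
    split
    · exact healthProb_nonneg hq ω
    · rfl

theorem welfare_le_of_imp {B B' : ℕ} {u : Fin n → ℝ} (hq : ∀ i, 0 ≤ q i ∧ q i ≤ 1)
    (hu : ∀ i, 0 ≤ u i) {T : Fin B → Finset (Fin n)} {T' : Fin B' → Finset (Fin n)}
    (h : ∀ i ω, healthProb q ω ≠ 0 → InNegTest T ω i → InNegTest T' ω i) :
    welfare q u T ≤ welfare q u T' :=
  sum_le_sum fun i _ =>
    mul_le_mul_of_nonneg_left (inNegProb_le_of_imp hq (h i)) (hu i)

end Probability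

theorem InNegTest.update_sdiff {n B : ℕ} {T : Fin B → Finset (Fin n)} {ω : Fin n → Bool}
    {i : Fin n} {j' j : Fin B} (hne : j' ≠ j) (hhealthy : ∀ k ∈ T j' \ T j, ω k = true)
    (hi : InNegTest T ω i) : InNegTest (Function.update T j (T j \ T j')) ω i := by
  obtain ⟨m, him, hneg⟩ := hi
  by_cases hm : m = j
  · subst hm
    by_cases hij' : i ∈ T j'
    · refine ⟨j', by rwa [Function.update_of_ne hne], fun k hk => ?_⟩
      rw [Function.update_of_ne hne] at hk
      by_cases hkm : k ∈ T m
      · exact hneg k hkm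
      · exact hhealthy k (mem_sdiff.mpr ⟨hk, hkm⟩)
    · refine ⟨m, ?_, fun k hk => ?_⟩
      · rw [Function.update_self]
        exact mem_sdiff.mpr ⟨him, hij'⟩
      · rw [Function.update_self] at hk
        exact hneg k (mem_sdiff.mp hk).1
  · exact ⟨m, by rwa [Function.update_of_ne hm], fun k hk =>
      hneg k (by rwa [Function.update_of_ne hm] at hk)⟩

theorem stmt10_general {n B : ℕ} (q u : Fin n → ℝ)
    (hq : ∀ i, 0 ≤ q i ∧ q i ≤ 1) (hu : ∀ i, 0 ≤ u i)
    (Tstar : Fin B → Finset (Fin n))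
    (j' j : Fin B) (hlt : j' < j)
    (hsure : ∀ i ∈ Tstar j' \ Tstar j, q i = 1) :
    welfare q u Tstar ≤
      welfare q u (Function.update Tstar j (Tstar j \ Tstar j')) :=
  welfare_le_of_imp hq hu fun _ _ hω =>
    InNegTest.update_sdiff hlt.ne fun k hk => eq_true_of_healthProb_ne_zero hω (hsure k hk)

/-- If `T*` is an optimal (possibly overlapping) regime with two distinct tests
`T* j'`, `T* j` (with `j' < j`) such that every individual in `T* j' \ T* j` is healthy
with probability 1, then replacing `T* j` by `T* j \ T* j'` yields a regime with welfare
at least that of `T*`. -/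
theorem stmt10 {n B G : ℕ} (q u : Fin n → ℝ)
    (hq : ∀ i, 0 ≤ q i ∧ q i ≤ 1) (hu : ∀ i, 0 ≤ u i)
    (Tstar : Fin B → Finset (Fin n)) (hsize : ∀ j, (Tstar j).card ≤ G)
    (hopt : ∀ T : Fin B → Finset (Fin n), (∀ j, (T j).card ≤ G) →
      welfare q u T ≤ welfare q u Tstar)
    (j' j : Fin B) (hlt : j' < j) (hne : Tstar j' ≠ Tstar j)
    (hsure : ∀ i ∈ Tstar j' \ Tstar j, q i = 1) :
    welfare q u Tstar ≤
      welfare q u (Function.update Tstar j (Tstar j \ Tstar j')) :=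
  stmt10_general q u hq hu Tstar j' j hlt hsure
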